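/- Let P^{U0}_j denote the distribution on X_j that assigns probability 0 to the symbol 0 and probability 1/(r_j−1) to each nonzero symbol, j = 1,2. For the product input distribution P = P^{U0}_1 × P^{U0}_2, the rate pair R*_2 is attained: I_P(X_1;Y_2|X_2) = C_{1,1} and I_P(X_2;Y_1|X_1) = C_{2,1}. -/

import Mathlib

open Real BigOperators Finset

/-- Entropy of a finite probability vector, with the convention `0 * log 0 = 0`
(automatic since `Real.log 0 = 0`). -/
noncomputable def ent {n : ℕ} (p : Fin n → ℝ) : ℝ := -∑ y, p y * Real.log (p y)

/-- `Q` is a probability distribution on `Fin n`. -/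
def IsProbDist {n : ℕ} (Q : Fin n → ℝ) : Prop := (∀ x, 0 ≤ Q x) ∧ ∑ x, Q x = 1

/-- `P` is a joint probability distribution. -/
def IsJointProbDist {m n : ℕ} (P : Fin m → Fin n → ℝ) : Prop :=
  (∀ x1 x2, 0 ≤ P x1 x2) ∧ ∑ x1, ∑ x2, P x1 x2 = 1

/-- First marginal `P_1`. -/
noncomputable def marg1 {m n : ℕ} (P : Fin m → Fin n → ℝ) (x1 : Fin m) : ℝ := ∑ x2, P x1 x2

/-- Second marginal `P_2`. -/
noncomputable def marg2 {m n : ℕ} (P : Fin m → Fin n → ℝ) (x2 : Fin n) : ℝ := ∑ x1, P x1 x2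

/-- Conditional mutual information `I_P(X₁;Y₂|X₂)`; terms with
`P x1 x2 * W2 x1 x2 y2 = 0` vanish, and summands with `marg2 P x2 = 0` vanish
since then `P x1 x2 = 0`. -/
noncomputable def condMI1 {m n t : ℕ} (P : Fin m → Fin n → ℝ)
    (W2 : Fin m → Fin n → Fin t → ℝ) : ℝ :=
  ∑ x2, ∑ x1, ∑ y2, P x1 x2 * W2 x1 x2 y2 *
    Real.log (W2 x1 x2 y2 / ((∑ x1', P x1' x2 * W2 x1' x2 y2) / marg2 P x2))

/-- Conditional mutual information `I_P(X₂;Y₁|X₁)`. -/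
noncomputable def condMI2 {m n t : ℕ} (P : Fin m → Fin n → ℝ)
    (W1 : Fin m → Fin n → Fin t → ℝ) : ℝ :=
  ∑ x1, ∑ x2, ∑ y1, P x1 x2 * W1 x1 x2 y1 *
    Real.log (W1 x1 x2 y1 / ((∑ x2', P x1 x2' * W1 x1 x2' y1) / marg1 P x1))

/-- Structural assumptions of a generalized push-to-talk two-way channel with
input alphabets `Fin (r1+3)`, `Fin (r2+3)` and output alphabets `Fin (s1+2)`,
`Fin (s2+2)`: both marginal channels are transition matrices; the row of
input `0` of each user is uniform; for each state, the nonzero-input rows are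
permutations of the row of input `1` and have constant column sums
(weak symmetry). -/
def GenPTT {r1 r2 s1 s2 : ℕ} (W1 : Fin (r1 + 3) → Fin (r2 + 3) → Fin (s1 + 2) → ℝ)
    (W2 : Fin (r1 + 3) → Fin (r2 + 3) → Fin (s2 + 2) → ℝ) : Prop :=
  (∀ x1 x2 y1, 0 ≤ W1 x1 x2 y1) ∧ (∀ x1 x2 y2, 0 ≤ W2 x1 x2 y2) ∧
  (∀ x1 x2, ∑ y1, W1 x1 x2 y1 = 1) ∧ (∀ x1 x2, ∑ y2, W2 x1 x2 y2 = 1) ∧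
  (∀ x2 y2, W2 0 x2 y2 = 1 / ((s2 : ℝ) + 2)) ∧
  (∀ x2, ∀ x1 : Fin (r1 + 3), x1 ≠ 0 →
    ∃ σ : Equiv.Perm (Fin (s2 + 2)), ∀ y2, W2 x1 x2 y2 = W2 1 x2 (σ y2)) ∧
  (∀ x2, ∀ y2 y2' : Fin (s2 + 2),
    ∑ x1 ∈ Finset.univ.filter (fun x1 => x1 ≠ (0 : Fin (r1 + 3))), W2 x1 x2 y2 =
    ∑ x1 ∈ Finset.univ.filter (fun x1 => x1 ≠ (0 : Fin (r1 + 3))), W2 x1 x2 y2') ∧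
  (∀ x1 y1, W1 x1 0 y1 = 1 / ((s1 : ℝ) + 2)) ∧
  (∀ x1, ∀ x2 : Fin (r2 + 3), x2 ≠ 0 →
    ∃ σ : Equiv.Perm (Fin (s1 + 2)), ∀ y1, W1 x1 x2 y1 = W1 x1 1 (σ y1)) ∧
  (∀ x1, ∀ y1 y1' : Fin (s1 + 2),
    ∑ x2 ∈ Finset.univ.filter (fun x2 => x2 ≠ (0 : Fin (r2 + 3))), W1 x1 x2 y1 =
    ∑ x2 ∈ Finset.univ.filter (fun x2 => x2 ≠ (0 : Fin (r2 + 3))), W1 x1 x2 y1')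

/-- `C_{1,x₂} = log s₂ − H(row of input 1 of Q_{1,x₂})`. -/
noncomputable def C1 {r1 r2 s2 : ℕ} (W2 : Fin (r1 + 3) → Fin (r2 + 3) → Fin (s2 + 2) → ℝ)
    (x2 : Fin (r2 + 3)) : ℝ := Real.log ((s2 : ℝ) + 2) - ent (fun y2 => W2 1 x2 y2)

/-- `C_{2,x₁} = log s₁ − H(row of input 1 of Q_{2,x₁})`. -/
noncomputable def C2 {r1 r2 s1 : ℕ} (W1 : Fin (r1 + 3) → Fin (r2 + 3) → Fin (s1 + 2) → ℝ)
    (x1 : Fin (r1 + 3)) : ℝ := Real.log ((s1 : ℝ) + 2) - ent (fun y1 => W1 x1 1 y1)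

/-- The channel symmetry property: `C_{1,x₂} = C_{1,1}` for all `x₂ ≠ 0` and
`C_{2,x₁} = C_{2,1}` for all `x₁ ≠ 0`. -/
def SymProp {r1 r2 s1 s2 : ℕ} (W1 : Fin (r1 + 3) → Fin (r2 + 3) → Fin (s1 + 2) → ℝ)
    (W2 : Fin (r1 + 3) → Fin (r2 + 3) → Fin (s2 + 2) → ℝ) : Prop :=
  (∀ x2 : Fin (r2 + 3), x2 ≠ 0 → C1 W2 x2 = C1 W2 1) ∧
  (∀ x1 : Fin (r1 + 3), x1 ≠ 0 → C2 W1 x1 = C2 W1 1)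

/-!
Under the product input distribution the symbol `0` is never sent, so for each nonzero `x₂`
user 1 drives the weakly symmetric matrix `Q_{1,x₂}` with a uniform input. Constant column
sums make the output uniform, hence the conditional mutual information given `x₂` is
`log s₂ - H(row) = C_{1,x₂}`, and the symmetry property makes this `C_{1,1}` for every `x₂ ≠ 0`.
The second rate is the same computation with the users interchanged.
-/

theorem ent_eq_of_perm {n : ℕ} {p q : Fin n → ℝ}
    (h : ∃ σ : Equiv.Perm (Fin n), ∀ y, p y = q (σ y)) : ent p = ent q := by
  obtain ⟨σ, hσ⟩ := h
  simp only [ent, hσ]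
  rw [Equiv.sum_comp σ (fun y => q y * Real.log (q y))]

theorem sum_mul_log_mul_eq_log_sub_ent {n : ℕ} (p : Fin n → ℝ) (hp : ∑ y, p y = 1)
    {c : ℝ} (hc : c ≠ 0) : ∑ y, p y * Real.log (p y * c) = Real.log c - ent p := by
  have hsplit : ∀ y, p y * Real.log (p y * c) = p y * Real.log (p y) + p y * Real.log c := by
    intro y
    rcases eq_or_ne (p y) 0 with h | h
    · simp [h]
    · rw [Real.log_mul h hc, mul_add]
  simp only [hsplit, sum_add_distrib, ← sum_mul, hp, ent]
  ring

theorem sum_eq_card_div_of_sum_eq_sum {ι : Type*} {t : ℕ} (V : ι → Fin t → ℝ) (S : Finset ι)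
    (hrow : ∀ x ∈ S, ∑ y, V x y = 1) (hcol : ∀ y y', ∑ x ∈ S, V x y = ∑ x ∈ S, V x y')
    (y : Fin t) : ∑ x ∈ S, V x y = #S / t := by
  have ht : (t : ℝ) ≠ 0 := Nat.cast_ne_zero.2 y.pos.ne'
  rw [eq_div_iff ht]
  calc (∑ x ∈ S, V x y) * t = ∑ y' : Fin t, ∑ x ∈ S, V x y' := by
        simp [hcol _ y, mul_comm]
    _ = ∑ x ∈ S, ∑ y', V x y' := sum_comm
    _ = #S := by simp [sum_congr rfl hrow]

noncomputable def uniformOn {ι : Type*} [DecidableEq ι] (S : Finset ι) (x : ι) : ℝ :=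
  if x ∈ S then (#S : ℝ)⁻¹ else 0

theorem sum_uniformOn {ι : Type*} [Fintype ι] [DecidableEq ι] {S : Finset ι} (hS : S.Nonempty) :
    ∑ x, uniformOn S x = 1 := by
  simp [uniformOn, hS.card_pos.ne']

theorem uniformOn_filter_ne_zero (k : ℕ) (x : Fin (k + 3)) :
    uniformOn (univ.filter (· ≠ 0)) x = if x = 0 then 0 else ((k : ℝ) + 2)⁻¹ := by
  by_cases hx : x = 0
  · simp [uniformOn, hx]
  · simp [uniformOn, hx, filter_ne']

noncomputable def mutualInfo {ι : Type*} [Fintype ι] {t : ℕ} (a : ι → ℝ) (V : ι → Fin t → ℝ) :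
    ℝ :=
  ∑ x, ∑ y, a x * V x y * Real.log (V x y / ∑ x', a x' * V x' y)

theorem mutualInfo_uniformOn {ι : Type*} [Fintype ι] [DecidableEq ι] {t : ℕ}
    {S : Finset ι} (hS : S.Nonempty) (V : ι → Fin t → ℝ)
    (hrow : ∀ x ∈ S, ∑ y, V x y = 1) (hcol : ∀ y y', ∑ x ∈ S, V x y = ∑ x ∈ S, V x y')
    {h : ℝ} (hent : ∀ x ∈ S, ent (V x) = h) :
    mutualInfo (uniformOn S) V = Real.log t - h := by
  have hS0 : (#S : ℝ) ≠ 0 := Nat.cast_ne_zero.2 hS.card_pos.ne'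
  have ht : (t : ℝ) ≠ 0 := by
    obtain ⟨x, hx⟩ := hS
    have hsum := hrow x hx
    intro h0
    obtain rfl : t = 0 := by exact_mod_cast h0
    simp at hsum
  have hout : ∀ y, ∑ x, uniformOn S x * V x y = (t : ℝ)⁻¹ := by
    intro y
    simp only [uniformOn, ite_mul, zero_mul, sum_ite_mem, univ_inter, ← mul_sum,
      sum_eq_card_div_of_sum_eq_sum V S hrow hcol y]
    field_simp
  calc mutualInfo (uniformOn S) V
      = ∑ x, uniformOn S x * (Real.log t - ent (V x)) := by
        refine sum_congr rfl fun x _ => ?_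
        simp only [hout, div_inv_eq_mul, mul_assoc, ← mul_sum]
        by_cases hx : x ∈ S
        · rw [sum_mul_log_mul_eq_log_sub_ent (V x) (hrow x hx) ht]
        · simp [uniformOn, hx]
    _ = ∑ x, uniformOn S x * (Real.log t - h) := by
        refine sum_congr rfl fun x _ => ?_
        by_cases hx : x ∈ S
        · rw [hent x hx]
        · simp [uniformOn, hx]
    _ = Real.log t - h := by rw [← sum_mul, sum_uniformOn hS, one_mul]

theorem condMI1_of_prod {m n t : ℕ} {P : Fin m → Fin n → ℝ} {a : Fin m → ℝ} {b : Fin n → ℝ}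
    (ha : ∑ x, a x = 1) (hP : ∀ x1 x2, P x1 x2 = a x1 * b x2) (V : Fin m → Fin n → Fin t → ℝ) :
    condMI1 P V = ∑ x2, b x2 * mutualInfo a (fun x1 => V x1 x2) := by
  unfold condMI1 mutualInfo
  refine sum_congr rfl fun x2 _ => ?_
  rcases eq_or_ne (b x2) 0 with hb | hb
  · simp [hP, hb]
  have hmarg : marg2 P x2 = b x2 := by simp [marg2, hP, ← sum_mul, ha]
  have hcond : ∀ y, (∑ x1', P x1' x2 * V x1' x2 y) / marg2 P x2 =
      ∑ x1', a x1' * V x1' x2 y := by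
    intro y
    simp only [hmarg, hP, mul_right_comm _ (b x2), ← sum_mul]
    field_simp
  simp only [hcond]
  simp only [hP, mul_sum]
  exact sum_congr rfl fun _ _ => sum_congr rfl fun _ _ => by ring

theorem condMI1_uniformOn_prod {m n t : ℕ} {S : Finset (Fin m)} {T : Finset (Fin n)}
    (hS : S.Nonempty) (hT : T.Nonempty) {P : Fin m → Fin n → ℝ}
    (hP : ∀ x1 x2, P x1 x2 = uniformOn S x1 * uniformOn T x2) (V : Fin m → Fin n → Fin t → ℝ)
    (hrow : ∀ x1 ∈ S, ∀ x2, ∑ y, V x1 x2 y = 1)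
    (hcol : ∀ x2, ∀ y y', ∑ x1 ∈ S, V x1 x2 y = ∑ x1 ∈ S, V x1 x2 y')
    {h : ℝ} (hent : ∀ x2 ∈ T, ∀ x1 ∈ S, ent (V x1 x2) = h) :
    condMI1 P V = Real.log t - h := by
  rw [condMI1_of_prod (sum_uniformOn hS) hP]
  calc ∑ x2, uniformOn T x2 * mutualInfo (uniformOn S) (fun x1 => V x1 x2)
      = ∑ x2, uniformOn T x2 * (Real.log t - h) := by
        refine sum_congr rfl fun x2 _ => ?_
        by_cases hx2 : x2 ∈ T
        · rw [mutualInfo_uniformOn hS _ (fun x1 hx1 => hrow x1 hx1 x2) (hcol x2) (hent x2 hx2)]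
        · simp [uniformOn, hx2]
    _ = Real.log t - h := by rw [← sum_mul, sum_uniformOn hT, one_mul]

theorem condMI2_eq_condMI1_swap {m n t : ℕ} (P : Fin m → Fin n → ℝ)
    (W : Fin m → Fin n → Fin t → ℝ) :
    condMI2 P W = condMI1 (fun x2 x1 => P x1 x2) (fun x2 x1 => W x1 x2) :=
  rfl

/-- The rate pair `R*₂ = (C₁₁, C₂₁)` is attained by the product of the two
distributions that are uniform on the nonzero symbols. -/
theorem stmt12 (r1 r2 s1 s2 : ℕ)
    (W1 : Fin (r1 + 3) → Fin (r2 + 3) → Fin (s1 + 2) → ℝ)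
    (W2 : Fin (r1 + 3) → Fin (r2 + 3) → Fin (s2 + 2) → ℝ)
    (hW : GenPTT W1 W2) (hSym : SymProp W1 W2) :
    condMI1 (fun x1 x2 => (if x1 = 0 then (0 : ℝ) else ((r1 : ℝ) + 2)⁻¹) *
        (if x2 = 0 then (0 : ℝ) else ((r2 : ℝ) + 2)⁻¹)) W2 = C1 W2 1 ∧
    condMI2 (fun x1 x2 => (if x1 = 0 then (0 : ℝ) else ((r1 : ℝ) + 2)⁻¹) *
        (if x2 = 0 then (0 : ℝ) else ((r2 : ℝ) + 2)⁻¹)) W1 = C2 W1 1 := by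
  obtain ⟨-, -, hrow1, hrow2, -, hperm2, hcol2, -, hperm1, hcol1⟩ := hW
  obtain ⟨hsym1, hsym2⟩ := hSym
  have hne {k : ℕ} : (univ.filter (· ≠ (0 : Fin (k + 3)))).Nonempty := ⟨1, by simp⟩
  constructor
  · rw [condMI1_uniformOn_prod hne hne
      (fun x1 x2 => by rw [uniformOn_filter_ne_zero, uniformOn_filter_ne_zero]) W2
      (fun x1 _ => hrow2 x1) hcol2 (h := ent (W2 1 1))]
    · simp [C1]
    · intro x2 hx2 x1 hx1
      rw [ent_eq_of_perm (hperm2 x2 x1 (by simpa using hx1))]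
      simpa [C1] using hsym1 x2 (by simpa using hx2)
  · rw [condMI2_eq_condMI1_swap, condMI1_uniformOn_prod hne hne
      (fun x2 x1 => by rw [uniformOn_filter_ne_zero, uniformOn_filter_ne_zero, mul_comm]) _
      (fun x2 _ x1 => hrow1 x1 x2) hcol1 (h := ent (W1 1 1))]
    · simp [C2]
    · intro x1 hx1 x2 hx2
      rw [ent_eq_of_perm (hperm1 x1 x2 (by simpa using hx2))]
      simpa [C2] using hsym2 x1 (by simpa using hx1)
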